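/- arXiv:1409.4558 — 4 statements merged into one kernel-verified Lean document; each statement's English description precedes it below -/
import Mathlib

section
/- (Donoghue) If λ is a corner point of the boundary of the numerical range W(A) of a bounded linear operator A, and λ ∈ W(A), then λ is an eigenvalue of A. Here λ is a corner point means: W(A) is contained in a sector with vertex at λ and opening angle strictly less than π. -/
open scoped ComplexInnerProductSpace in
/-- The numerical range `W(A) = {⟨Af, f⟩ : ‖f‖ = 1}`. -/
def numericalRange {H : Type*} [NormedAddCommGroup H] [InnerProductSpace ℂ H]
    (A : H →L[ℂ] H) : Set ℂ :=
  {z | ∃ f : H, ‖f‖ = 1 ∧ ⟪f, A f⟫ = z}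

/-- `lam` is a corner point of `S`: `S` is contained in a sector with vertex `lam`
and opening angle `α < π`. -/
def IsCornerPoint (S : Set ℂ) (lam : ℂ) : Prop :=
  ∃ θ α : ℝ, α < Real.pi ∧
    ∀ z ∈ S, ∃ r φ : ℝ, 0 ≤ r ∧ θ ≤ φ ∧ φ ≤ θ + α ∧
      z = lam + r * Complex.exp (φ * Complex.I)

private lemma aux_zero (a C : ℝ) (h : ∀ t : ℝ, 0 < t → |a| ≤ t * C) : a = 0 := by
  rcases le_or_gt C 0 with hC | hC
  · have h1 := h 1 one_pos
    have : |a| ≤ 0 := by nlinarith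
    exact abs_nonpos_iff.mp this
  · by_contra ha
    have ha' : 0 < |a| := abs_pos.mpr ha
    have h2 := h (|a| / (2 * C)) (by positivity)
    have : |a| / (2 * C) * C = |a| / 2 := by field_simp
    rw [this] at h2
    linarith

private lemma quad_re (a b : ℝ) (h : ∀ t : ℝ, 0 ≤ t * a + t ^ 2 * b) : a = 0 := by
  apply aux_zero a b
  intro t ht
  have h1 := h t
  have h2 := h (-t)
  have : t * |a| ≤ t ^ 2 * b := by
    rcases abs_cases a with ⟨hc, _⟩ | ⟨hc, _⟩ <;> nlinarith
  calc |a| = t * |a| / t := by field_simp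
    _ ≤ t ^ 2 * b / t := div_le_div_of_nonneg_right this ht.le
    _ = t * b := by field_simp

private lemma quad_im (a b c : ℝ) (h : ∀ t : ℝ, |t * a + t ^ 2 * b| ≤ t ^ 2 * c) : a = 0 := by
  apply aux_zero a (c + |b|)
  intro t ht
  have h1 := h t
  have h2 : |t * a| ≤ |t * a + t ^ 2 * b| + |t ^ 2 * b| := by
    have h := abs_add_le (t * a + t ^ 2 * b) (-(t ^ 2 * b))
    rw [abs_neg] at h
    have he : t * a + t ^ 2 * b + -(t ^ 2 * b) = t * a := by ring
    rwa [he] at h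
  have h3 : |t * a| = t * |a| := by rw [abs_mul, abs_of_pos ht]
  have h4 : |t ^ 2 * b| = t ^ 2 * |b| := by rw [abs_mul, abs_of_pos (by positivity)]
  have h5 : t * |a| ≤ t ^ 2 * (c + |b|) := by nlinarith
  calc |a| = t * |a| / t := by field_simp
    _ ≤ t ^ 2 * (c + |b|) / t := div_le_div_of_nonneg_right h5 ht.le
    _ = t * (c + |b|) := by field_simp

open scoped ComplexInnerProductSpace in
/-- Donoghue: a corner point of `∂W(A)` belonging to `W(A)` is an
eigenvalue of `A`. -/
theorem corner_point_in_numericalRange_is_eigenvalue {H : Type*} [NormedAddCommGroup H]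
    [InnerProductSpace ℂ H] [CompleteSpace H] (A : H →L[ℂ] H) (lam : ℂ)
    (hb : lam ∈ frontier (numericalRange A)) (hc : IsCornerPoint (numericalRange A) lam)
    (hw : lam ∈ numericalRange A) :
    ∃ f : H, f ≠ 0 ∧ A f = lam • f := by
  obtain ⟨θ, α, hαπ, hsec⟩ := hc
  obtain ⟨f, hf1, hfA⟩ := hw
  have hα0 : 0 ≤ α := by
    obtain ⟨r, φ, hr, h1, h2, h3⟩ := hsec lam ⟨f, hf1, hfA⟩
    linarith
  set δ : ℝ := α / 2 with hδdef
  have hδ0 : 0 ≤ δ := by positivity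
  have hδπ : δ < Real.pi / 2 := by simp only [hδdef]; linarith
  have hcosδ : 0 < Real.cos δ := Real.cos_pos_of_mem_Ioo ⟨by linarith [Real.pi_pos], hδπ⟩
  set K : ℝ := Real.tan δ with hKdef
  have hK0 : 0 ≤ K := Real.tan_nonneg_of_nonneg_of_le_pi_div_two hδ0 hδπ.le
  have hKs : Real.sin δ = K * Real.cos δ := by
    rw [hKdef, Real.tan_eq_sin_div_cos]; field_simp
  set c : ℂ := Complex.exp ((-(θ + δ) : ℝ) * Complex.I) with hcdef
  set T : H →L[ℂ] H := c • (A - lam • (1 : H →L[ℂ] H)) with hTdef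
  have hTapp : ∀ g : H, T g = c • (A g - lam • g) := by
    intro g; simp [hTdef]
  -- the sector condition for the form of T
  have hsector : ∀ g : H, 0 ≤ (⟪g, T g⟫ : ℂ).re ∧ |(⟪g, T g⟫ : ℂ).im| ≤ K * (⟪g, T g⟫ : ℂ).re := by
    have hunit : ∀ g : H, ‖g‖ = 1 → 0 ≤ (⟪g, T g⟫ : ℂ).re ∧
        |(⟪g, T g⟫ : ℂ).im| ≤ K * (⟪g, T g⟫ : ℂ).re := by
      intro g hg
      have hgg : (⟪g, g⟫ : ℂ) = 1 := by
        rw [inner_self_eq_norm_sq_to_K, hg]; norm_num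
      have hval : (⟪g, T g⟫ : ℂ) = c * ((⟪g, A g⟫ : ℂ) - lam) := by
        rw [hTapp, inner_smul_right, inner_sub_right, inner_smul_right, hgg]
        ring
      obtain ⟨r, φ, hr, hφ1, hφ2, hz⟩ := hsec (⟪g, A g⟫ : ℂ) ⟨g, hg, rfl⟩
      set ψ : ℝ := φ - θ - δ with hψdef
      have hψ1 : -δ ≤ ψ := by simp only [hψdef]; linarith
      have hψ2 : ψ ≤ δ := by simp only [hψdef, hδdef]; linarith
      have hval2 : (⟪g, T g⟫ : ℂ) = (r : ℂ) * Complex.exp ((ψ : ℝ) * Complex.I) := by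
        rw [hval, hz, hcdef, add_sub_cancel_left]
        rw [show ((ψ : ℝ) : ℂ) * Complex.I =
            ((-(θ + δ) : ℝ) : ℂ) * Complex.I + ((φ : ℝ) : ℂ) * Complex.I by
          simp only [hψdef]; push_cast; ring]
        rw [Complex.exp_add]
        ring
      have hre : (⟪g, T g⟫ : ℂ).re = r * Real.cos ψ := by
        rw [hval2, Complex.re_ofReal_mul, Complex.exp_ofReal_mul_I_re]
      have him : (⟪g, T g⟫ : ℂ).im = r * Real.sin ψ := by
        rw [hval2, Complex.im_ofReal_mul, Complex.exp_ofReal_mul_I_im]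
      have hcosψ : Real.cos δ ≤ Real.cos ψ := by
        have h := Real.cos_le_cos_of_nonneg_of_le_pi (abs_nonneg ψ)
          (by linarith [Real.pi_pos]) (abs_le.mpr ⟨hψ1, hψ2⟩)
        rwa [Real.cos_abs] at h
      have hsinψ : |Real.sin ψ| ≤ Real.sin δ := by
        rw [abs_le]
        constructor
        · rw [← Real.sin_neg]
          apply (Real.strictMonoOn_sin.monotoneOn ⟨by linarith, by linarith⟩
            ⟨by linarith, by linarith⟩ (by linarith))
        · exact Real.strictMonoOn_sin.monotoneOn ⟨by linarith, by linarith⟩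
            ⟨by linarith, by linarith⟩ hψ2
      constructor
      · rw [hre]; exact mul_nonneg hr (by linarith)
      · rw [hre, him, abs_mul, abs_of_nonneg hr]
        calc r * |Real.sin ψ| ≤ r * Real.sin δ := by
              exact mul_le_mul_of_nonneg_left hsinψ hr
          _ = r * (K * Real.cos δ) := by rw [hKs]
          _ = (K * r) * Real.cos δ := by ring
          _ ≤ (K * r) * Real.cos ψ :=
              mul_le_mul_of_nonneg_left hcosψ (mul_nonneg hK0 hr)
          _ = K * (r * Real.cos ψ) := by ring
    intro g
    rcases eq_or_ne g 0 with rfl | hg0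
    · simp
    · set u : H := ((‖g‖ : ℂ))⁻¹ • g with hudef
      have hgnorm : (0 : ℝ) < ‖g‖ := norm_pos_iff.mpr hg0
      have hc0' : ((‖g‖ : ℝ) : ℂ) ≠ 0 := by exact_mod_cast hgnorm.ne'
      have hu1 : ‖u‖ = 1 := by
        rw [hudef, norm_smul, norm_inv]
        simp [hgnorm.ne']
      have hgu : g = (‖g‖ : ℂ) • u := by
        rw [hudef, smul_smul, mul_inv_cancel₀ hc0', one_smul]
      have hscale : (⟪g, T g⟫ : ℂ) = ((‖g‖ ^ 2 : ℝ) : ℂ) * (⟪u, T u⟫ : ℂ) := by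
        conv_lhs => rw [hgu]
        rw [map_smul, inner_smul_left, inner_smul_right]
        rw [Complex.conj_ofReal]
        push_cast
        ring
      obtain ⟨h1, h2⟩ := hunit u hu1
      constructor
      · rw [hscale, Complex.re_ofReal_mul]
        positivity
      · rw [hscale, Complex.re_ofReal_mul, Complex.im_ofReal_mul, abs_mul,
          abs_of_nonneg (by positivity : (0:ℝ) ≤ ‖g‖ ^ 2)]
        calc ‖g‖ ^ 2 * |(⟪u, T u⟫ : ℂ).im| ≤ ‖g‖ ^ 2 * (K * (⟪u, T u⟫ : ℂ).re) :=
              mul_le_mul_of_nonneg_left h2 (by positivity)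
          _ = K * (‖g‖ ^ 2 * (⟪u, T u⟫ : ℂ).re) := by ring
  -- ⟪f, T f⟫ = 0
  have hff : (⟪f, f⟫ : ℂ) = 1 := by
    rw [inner_self_eq_norm_sq_to_K, hf1]; norm_num
  have hq0 : (⟪f, T f⟫ : ℂ) = 0 := by
    rw [hTapp, inner_smul_right, inner_sub_right, inner_smul_right, hff, hfA]
    ring
  -- expansion
  have hExp : ∀ (h : H) (t : ℝ), (⟪f + (t : ℂ) • h, T (f + (t : ℂ) • h)⟫ : ℂ) =
      (t : ℂ) * ((⟪f, T h⟫ : ℂ) + (⟪h, T f⟫ : ℂ)) + (t : ℂ) ^ 2 * (⟪h, T h⟫ : ℂ) := by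
    intro h t
    rw [map_add, map_smul, inner_add_left, inner_add_right, inner_add_right,
      inner_smul_left, inner_smul_right, inner_smul_left, inner_smul_right,
      Complex.conj_ofReal, hq0]
    ring
  -- cross term vanishes
  have hcross : ∀ h : H, (⟪f, T h⟫ : ℂ) + (⟪h, T f⟫ : ℂ) = 0 := by
    intro h
    set a : ℂ := (⟪f, T h⟫ : ℂ) + (⟪h, T f⟫ : ℂ) with hadef
    set b : ℂ := (⟪h, T h⟫ : ℂ) with hbdef
    have hre : ∀ t : ℝ, (⟪f + (t : ℂ) • h, T (f + (t : ℂ) • h)⟫ : ℂ).re =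
        t * a.re + t ^ 2 * b.re := by
      intro t
      rw [hExp h t]
      simp only [Complex.add_re, ← Complex.ofReal_pow, Complex.re_ofReal_mul]
      rw [hadef, Complex.add_re]
    have him : ∀ t : ℝ, (⟪f + (t : ℂ) • h, T (f + (t : ℂ) • h)⟫ : ℂ).im =
        t * a.im + t ^ 2 * b.im := by
      intro t
      rw [hExp h t]
      simp only [Complex.add_im, ← Complex.ofReal_pow, Complex.im_ofReal_mul]
      rw [hadef, Complex.add_im]
    have hare : a.re = 0 := by
      apply quad_re a.re b.re
      intro t
      have := (hsector (f + (t : ℂ) • h)).1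
      rw [hre t] at this
      exact this
    have haim : a.im = 0 := by
      apply quad_im a.im b.im (K * b.re)
      intro t
      have h1 := (hsector (f + (t : ℂ) • h)).2
      rw [hre t, him t, hare] at h1
      simp only [mul_zero, zero_add] at h1
      calc |t * a.im + t ^ 2 * b.im| ≤ K * (t ^ 2 * b.re) := h1
        _ = t ^ 2 * (K * b.re) := by ring
    exact Complex.ext hare haim
  -- deduce T f = 0
  have hTf : T f = 0 := by
    have key : ∀ h : H, (⟪h, T f⟫ : ℂ) = 0 := by
      intro h
      have h1 := hcross h
      have h2 := hcross (Complex.I • h)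
      rw [map_smul, inner_smul_left, inner_smul_right, Complex.conj_I] at h2
      have : Complex.I * ((⟪f, T h⟫ : ℂ) - (⟪h, T f⟫ : ℂ)) = 0 := by
        rw [mul_sub]; linear_combination h2
      have h3 : (⟪f, T h⟫ : ℂ) = (⟪h, T f⟫ : ℂ) := by
        rcases mul_eq_zero.mp this with h' | h'
        · exact absurd h' Complex.I_ne_zero
        · exact sub_eq_zero.mp h'
      have h4 : (2 : ℂ) * (⟪h, T f⟫ : ℂ) = 0 := by linear_combination h1 - h3
      simpa using h4
    have := key (T f)
    exact inner_self_eq_zero.mp this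
  -- conclude
  refine ⟨f, ?_, ?_⟩
  · intro h0
    rw [h0, norm_zero] at hf1
    exact zero_ne_one hf1
  · have hc0 : c ≠ 0 := Complex.exp_ne_zero _
    have := hTf
    rw [hTapp] at this
    have h2 : A f - lam • f = 0 := by
      rcases smul_eq_zero.mp this with h' | h'
      · exact absurd h' hc0
      · exact h'
    rw [sub_eq_zero] at h2
    exact h2
end

section
/- (Hildebrandt) If λ is a corner point of the boundary of the numerical range W(A) of a bounded linear operator A (whether or not λ ∈ W(A)), then λ lies in the approximate point spectrum of A. -/
open Filter Topology

/-- The approximate point spectrum. -/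
def approxPointSpectrum {H : Type*} [NormedAddCommGroup H] [InnerProductSpace ℂ H]
    (A : H →L[ℂ] H) : Set ℂ :=
  {lam | ∃ u : ℕ → H, (∀ n, ‖u n‖ = 1) ∧
    Tendsto (fun n => ‖A (u n) - lam • u n‖) atTop (𝓝 0)}

/-! After translating by `λ`, the numerical range of `T = A - λ` lies in a sector with vertex `0`
and opening `< π`, i.e. in two half-planes `Re (ωⱼ z) ≥ 0` whose boundary lines are not parallel.
So `ω₁ T` and `ω₂ T` are accretive, and Cauchy–Schwarz for the positive semidefinite Hermitian
forms `⟪y, ωⱼ T x⟫ + ⟪ωⱼ T y, x⟫` (which together determine `⟪y, T x⟫`) bounds `‖T x‖` by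
`√(Re (ω₁ ⟪x, T x⟫))` and `√(Re (ω₂ ⟪x, T x⟫))`. Since `λ ∈ closure W(A)`, there are unit vectors
`xₙ` with `⟪xₙ, T xₙ⟫ → 0`, hence `‖T xₙ‖ → 0`. -/

open scoped ComplexInnerProductSpace ComplexConjugate

namespace ContinuousLinearMap

variable {H : Type*} [NormedAddCommGroup H] [InnerProductSpace ℂ H]

def IsAccretive (S : H →L[ℂ] H) : Prop :=
  ∀ x, 0 ≤ (⟪x, S x⟫).re

theorem IsAccretive.norm_inner_add_inner_sq_le {S : H →L[ℂ] H} (hS : S.IsAccretive) (x y : H) :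
    ‖⟪y, S x⟫ + ⟪S y, x⟫‖ ^ 2 ≤ 4 * ((⟪y, S y⟫).re * (⟪x, S x⟫).re) := by
  have re_eq (x : H) : (⟪x, S x⟫ + ⟪S x, x⟫).re = 2 * (⟪x, S x⟫).re := by
    rw [Complex.add_re, ← inner_conj_symm, Complex.conj_re]; ring
  -- the real part of the form of `S` is a positive semidefinite Hermitian form
  let c : PreInnerProductSpace.Core ℂ H :=
    { inner := fun y x => ⟪y, S x⟫ + ⟪S y, x⟫
      conj_inner_symm := fun x y => by simp only [map_add, inner_conj_symm]; ring
      re_inner_nonneg := fun x => by simp only [RCLike.re_to_complex, re_eq]; linarith [hS x]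
      add_left := fun x y z => by simp only [map_add, inner_add_left]; ring
      smul_left := fun x y r => by simp only [map_smul, inner_smul_left]; ring }
  have h := InnerProductSpace.Core.inner_mul_inner_self_le (c := c) y x
  change ‖⟪y, S x⟫ + ⟪S y, x⟫‖ * ‖⟪x, S y⟫ + ⟪S x, y⟫‖
    ≤ (⟪y, S y⟫ + ⟪S y, y⟫).re * (⟪x, S x⟫ + ⟪S x, x⟫).re at h
  have hswap : ⟪x, S y⟫ + ⟪S x, y⟫ = conj (⟪y, S x⟫ + ⟪S y, x⟫) := by
    simp only [map_add, inner_conj_symm]; ring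
  rw [hswap, Complex.norm_conj, re_eq, re_eq] at h
  linarith

theorem IsAccretive.norm_inner_add_inner_le {S : H →L[ℂ] H} (hS : S.IsAccretive) (x y : H) :
    ‖⟪y, S x⟫ + ⟪S y, x⟫‖ ≤ 2 * ‖y‖ * √(‖S‖ * (⟪x, S x⟫).re) := by
  have hy : (⟪y, S y⟫).re ≤ ‖S‖ * ‖y‖ ^ 2 :=
    calc (⟪y, S y⟫).re ≤ ‖y‖ * ‖S y‖ := (Complex.re_le_norm _).trans (norm_inner_le_norm _ _)
      _ ≤ ‖y‖ * (‖S‖ * ‖y‖) := by gcongr; exact S.le_opNorm y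
      _ = ‖S‖ * ‖y‖ ^ 2 := by ring
  rw [← Real.sqrt_sq (by positivity : 0 ≤ 2 * ‖y‖), ← Real.sqrt_mul (by positivity)]
  apply Real.le_sqrt_of_sq_le
  calc ‖⟪y, S x⟫ + ⟪S y, x⟫‖ ^ 2 ≤ 4 * ((⟪y, S y⟫).re * (⟪x, S x⟫).re) :=
        hS.norm_inner_add_inner_sq_le x y
    _ ≤ 4 * ((‖S‖ * ‖y‖ ^ 2) * (⟪x, S x⟫).re) := by gcongr; exact hS x
    _ = (2 * ‖y‖) ^ 2 * (‖S‖ * (⟪x, S x⟫).re) := by ring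

theorem IsAccretive.of_norm_eq_one {S : H →L[ℂ] H} (h : ∀ u, ‖u‖ = 1 → 0 ≤ (⟪u, S u⟫).re) :
    S.IsAccretive := by
  intro x
  rcases eq_or_ne x 0 with rfl | hx
  · simp
  set u := ((‖x‖ : ℂ)⁻¹) • x
  have hx' : x = (‖x‖ : ℂ) • u := by simp [u, smul_smul, hx]
  rw [hx', map_smul, inner_smul_left, inner_smul_right, Complex.conj_ofReal, ← mul_assoc,
    ← Complex.ofReal_mul, Complex.re_ofReal_mul]
  exact mul_nonneg (by positivity) (h u (norm_smul_inv_norm hx))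

theorem inner_sub_smul_one_apply_self (A : H →L[ℂ] H) (lam : ℂ) {u : H} (hu : ‖u‖ = 1) :
    ⟪u, (A - lam • 1) u⟫ = ⟪u, A u⟫ - lam := by
  simp [inner_self_eq_norm_sq_to_K, hu]

theorem inner_smul_apply_self (T : H →L[ℂ] H) (ω : ℂ) (x : H) :
    ⟪x, (ω • T) x⟫ = ω * ⟪x, T x⟫ := by
  rw [smul_apply, inner_smul_right]

theorem im_mul_norm_apply_le (T : H →L[ℂ] H) {ω₁ ω₂ : ℂ} (h₁ : (ω₁ • T).IsAccretive)
    (h₂ : (ω₂ • T).IsAccretive) (x : H) :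
    |(ω₁ * conj ω₂).im| * ‖T x‖ ≤ ‖ω₂‖ * √(‖ω₁ • T‖ * (ω₁ * ⟪x, T x⟫).re)
      + ‖ω₁‖ * √(‖ω₂ • T‖ * (ω₂ * ⟪x, T x⟫).re) := by
  set y := T x
  set b : ℂ → ℂ := fun ω => ⟪y, (ω • T) x⟫ + ⟪(ω • T) y, x⟫
  -- the real-part forms of `ω₁ • T` and `ω₂ • T` determine the form of `T`
  have key : 2 * ((ω₁ * conj ω₂).im * Complex.I) * ⟪y, y⟫ = conj ω₂ * b ω₁ - conj ω₁ * b ω₂ := by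
    have hz := Complex.sub_conj (ω₁ * conj ω₂)
    simp only [map_mul, Complex.conj_conj] at hz
    push_cast at hz
    simp only [b, smul_apply, inner_smul_left, inner_smul_right]
    linear_combination (-⟪y, y⟫) * hz
  have hb₁ := h₁.norm_inner_add_inner_le x y
  have hb₂ := h₂.norm_inner_add_inner_le x y
  rw [inner_smul_apply_self] at hb₁ hb₂
  have hbound : 2 * ‖y‖ * (|(ω₁ * conj ω₂).im| * ‖y‖) ≤ 2 * ‖y‖ *
      (‖ω₂‖ * √(‖ω₁ • T‖ * (ω₁ * ⟪x, y⟫).re) + ‖ω₁‖ * √(‖ω₂ • T‖ * (ω₂ * ⟪x, y⟫).re)) :=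
    calc 2 * ‖y‖ * (|(ω₁ * conj ω₂).im| * ‖y‖)
        = ‖2 * ((ω₁ * conj ω₂).im * Complex.I) * ⟪y, y⟫‖ := by
          rw [inner_self_eq_norm_sq_to_K]
          simp only [norm_mul, Complex.norm_ofNat, Complex.norm_real, Complex.norm_I, norm_pow,
            Real.norm_eq_abs, RCLike.norm_ofReal, abs_norm]
          ring
      _ = ‖conj ω₂ * b ω₁ - conj ω₁ * b ω₂‖ := by rw [key]
      _ ≤ ‖ω₂‖ * ‖b ω₁‖ + ‖ω₁‖ * ‖b ω₂‖ := by
          grw [norm_sub_le, norm_mul, norm_mul, Complex.norm_conj, Complex.norm_conj]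
      _ ≤ ‖ω₂‖ * (2 * ‖y‖ * √(‖ω₁ • T‖ * (ω₁ * ⟪x, y⟫).re))
          + ‖ω₁‖ * (2 * ‖y‖ * √(‖ω₂ • T‖ * (ω₂ * ⟪x, y⟫).re)) := by gcongr
      _ = _ := by ring
  rcases (norm_nonneg y).eq_or_lt with hy | hy
  · rw [← hy, mul_zero]; positivity
  · exact le_of_mul_le_mul_left hbound (by positivity)

theorem tendsto_norm_apply_of_tendsto_inner {T : H →L[ℂ] H} {ω₁ ω₂ : ℂ}
    (hω : (ω₁ * conj ω₂).im ≠ 0) (h₁ : (ω₁ • T).IsAccretive) (h₂ : (ω₂ • T).IsAccretive)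
    {u : ℕ → H} (hu : Tendsto (fun n => ⟪u n, T (u n)⟫) atTop (𝓝 0)) :
    Tendsto (fun n => ‖T (u n)‖) atTop (𝓝 0) := by
  set F : ℂ → ℝ := fun z => (‖ω₂‖ * √(‖ω₁ • T‖ * (ω₁ * z).re)
    + ‖ω₁‖ * √(‖ω₂ • T‖ * (ω₂ * z).re)) / |(ω₁ * conj ω₂).im|
  have hF : Tendsto (fun n => F ⟪u n, T (u n)⟫) atTop (𝓝 0) := by
    have hFc : Continuous F := by fun_prop
    have hF0 : F 0 = 0 := by simp [F]
    rw [← hF0]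
    exact (hFc.tendsto 0).comp hu
  refine squeeze_zero (fun n => norm_nonneg _) (fun n => ?_) hF
  rw [le_div_iff₀' (abs_pos.mpr hω)]
  exact im_mul_norm_apply_le T h₁ h₂ (u n)

end ContinuousLinearMap

theorem Complex.exp_neg_mul_I_mul_exp_mul_I (γ φ : ℝ) :
    exp (-γ * I) * exp (φ * I) = exp ((φ - γ : ℝ) * I) := by
  rw [← exp_add]; push_cast; ring_nf

theorem Complex.re_exp_neg_mul_I_mul_nonneg {r φ γ : ℝ} (hr : 0 ≤ r)
    (h₁ : γ - Real.pi / 2 ≤ φ) (h₂ : φ ≤ γ + Real.pi / 2) :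
    0 ≤ (exp (-γ * I) * (r * exp (φ * I))).re := by
  rw [mul_left_comm, exp_neg_mul_I_mul_exp_mul_I, re_ofReal_mul, exp_ofReal_mul_I_re]
  exact mul_nonneg hr (Real.cos_nonneg_of_mem_Icc ⟨by linarith, by linarith⟩)

theorem IsCornerPoint.exists_re_mul_sub_nonneg {S : Set ℂ} {lam : ℂ} (h : IsCornerPoint S lam) :
    ∃ ω₁ ω₂ : ℂ, (ω₁ * conj ω₂).im ≠ 0 ∧
      ∀ z ∈ S, 0 ≤ (ω₁ * (z - lam)).re ∧ 0 ≤ (ω₂ * (z - lam)).re := by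
  obtain ⟨θ, α, hα, hS⟩ := h
  -- widening the sector to opening `max α (π / 2)` keeps the two half-planes from being opposite
  set β := max α (Real.pi / 2)
  have hβ : β < Real.pi := max_lt hα (by linarith [Real.pi_pos])
  refine ⟨Complex.exp (-(θ + Real.pi / 2 : ℝ) * Complex.I),
    Complex.exp (-(θ + β - Real.pi / 2 : ℝ) * Complex.I), ?_, fun z hz => ?_⟩
  · have hconj : conj (-(θ + β - Real.pi / 2 : ℝ) * Complex.I)
        = (θ + β - Real.pi / 2 : ℝ) * Complex.I := by
      rw [map_mul, map_neg, Complex.conj_ofReal, Complex.conj_I]; ring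
    rw [← Complex.exp_conj, hconj, Complex.exp_neg_mul_I_mul_exp_mul_I,
      Complex.exp_ofReal_mul_I_im,
      show θ + β - Real.pi / 2 - (θ + Real.pi / 2) = β - Real.pi by ring, Real.sin_sub_pi,
      neg_ne_zero]
    exact (Real.sin_pos_of_pos_of_lt_pi (by positivity) hβ).ne'
  · obtain ⟨r, φ, hr, hθφ, hφα, rfl⟩ := hS z hz
    rw [add_sub_cancel_left]
    have hαβ : α ≤ β := le_max_left _ _
    exact ⟨Complex.re_exp_neg_mul_I_mul_nonneg hr (by linarith) (by linarith),
      Complex.re_exp_neg_mul_I_mul_nonneg hr (by linarith) (by linarith)⟩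

theorem isAccretive_smul_sub_of_numericalRange {H : Type*} [NormedAddCommGroup H]
    [InnerProductSpace ℂ H] (A : H →L[ℂ] H) (lam ω : ℂ)
    (h : ∀ z ∈ numericalRange A, 0 ≤ (ω * (z - lam)).re) :
    (ω • (A - lam • 1)).IsAccretive :=
  .of_norm_eq_one fun u hu => by
    rw [ContinuousLinearMap.inner_smul_apply_self,
      ContinuousLinearMap.inner_sub_smul_one_apply_self A lam hu]
    exact h _ ⟨u, hu, rfl⟩

theorem corner_point_mem_approxPointSpectrum_general {H : Type*} [NormedAddCommGroup H]
    [InnerProductSpace ℂ H] (A : H →L[ℂ] H) (lam : ℂ)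
    (hb : lam ∈ frontier (numericalRange A))
    (hc : IsCornerPoint (numericalRange A) lam) :
    lam ∈ approxPointSpectrum A := by
  obtain ⟨ω₁, ω₂, hω, hsec⟩ := hc.exists_re_mul_sub_nonneg
  obtain ⟨z, hzW, hz⟩ := mem_closure_iff_seq_limit.mp (frontier_subset_closure hb)
  choose u hu_norm hu_eq using hzW
  refine ⟨u, hu_norm, ?_⟩
  have hT : Tendsto (fun n => ⟪u n, (A - lam • 1) (u n)⟫) atTop (𝓝 0) := by
    refine (sub_self lam ▸ hz.sub_const lam).congr fun n => ?_
    rw [ContinuousLinearMap.inner_sub_smul_one_apply_self A lam (hu_norm n), hu_eq]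
  simpa using ContinuousLinearMap.tendsto_norm_apply_of_tendsto_inner hω
    (isAccretive_smul_sub_of_numericalRange A lam ω₁ fun z hz => (hsec z hz).1)
    (isAccretive_smul_sub_of_numericalRange A lam ω₂ fun z hz => (hsec z hz).2) hT

/-- Hildebrandt: a corner point of `∂W(A)` lies in the approximate
point spectrum of `A`. -/
theorem corner_point_mem_approxPointSpectrum {H : Type*} [NormedAddCommGroup H]
    [InnerProductSpace ℂ H] [CompleteSpace H] (A : H →L[ℂ] H) (lam : ℂ)
    (hb : lam ∈ frontier (numericalRange A))
    (hc : IsCornerPoint (numericalRange A) lam) :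
    lam ∈ approxPointSpectrum A :=
  corner_point_mem_approxPointSpectrum_general A lam hb hc
end

section
/- Let f : [−1,1] → ℝ be defined by f(x) = x⁴ for x ≤ 0 and f(x) = x^{3/2} for x > 0, and let Ω be the epigraph of f. Then f is convex, the boundary of Ω has upper curvature γ_u(0) = limsup_{x→0, x≠0} f(x)/x² = ∞ at the origin, and lower curvature γ_l(0) = liminf_{x→0, x≠0} f(x)/x² = 0 at the origin. -/
open Filter Topology

/-- The function `f(x) = x⁴` for `x ≤ 0` and `f(x) = x^{3/2}` for `x > 0`. -/
noncomputable def paperF (x : ℝ) : ℝ :=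
  if x ≤ 0 then x ^ 4 else x ^ ((3 : ℝ) / 2)

/-- Derivative of `paperF`. -/
noncomputable def paperF' (x : ℝ) : ℝ :=
  if x ≤ 0 then 4 * x ^ 3 else (3 / 2 : ℝ) * x ^ ((1 : ℝ) / 2)

lemma paperF_zero : paperF 0 = 0 := by simp [paperF]

lemma paperF_nonneg (x : ℝ) : 0 ≤ paperF x := by
  unfold paperF
  split_ifs with h
  · positivity
  · exact Real.rpow_nonneg (le_of_lt (lt_of_not_ge h)) _

lemma paperF_hasDerivAt (x : ℝ) : HasDerivAt paperF (paperF' x) x := by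
  rcases lt_trichotomy x 0 with hx | hx | hx
  · have hEq : paperF =ᶠ[𝓝 x] fun y => y ^ 4 := by
      filter_upwards [Iio_mem_nhds hx] with y (hy : y < 0)
      simp [paperF, hy.le]
    have : HasDerivAt (fun y : ℝ => y ^ 4) ((4 : ℕ) * x ^ 3) x := hasDerivAt_pow 4 x
    have h2 : HasDerivAt paperF ((4 : ℕ) * x ^ 3) x := this.congr_of_eventuallyEq hEq
    simpa [paperF', hx.le] using h2
  · subst hx
    rw [hasDerivAt_iff_tendsto_slope]
    have h0 : paperF' 0 = 0 := by simp [paperF']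
    rw [h0]
    apply squeeze_zero_norm'
      (a := fun z : ℝ => |z| ^ ((1 : ℝ) / 2))
    · filter_upwards [self_mem_nhdsWithin,
        nhdsWithin_le_nhds (Metric.ball_mem_nhds (0:ℝ) one_pos)] with z hz hz1
      have hzne : z ≠ 0 := hz
      have hz1' : |z| < 1 := by simpa [Real.dist_eq] using hz1
      have hslope : slope paperF 0 z = paperF z / z := by
        simp [slope_def_field, paperF_zero, div_eq_mul_inv]
      rw [hslope]
      rcases lt_or_gt_of_ne hzne with hneg | hpos
      · have : paperF z / z = z ^ 3 := by
          simp only [paperF, hneg.le, if_pos]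
          field_simp
        rw [this]
        have h1 : ‖z ^ 3‖ = |z| ^ ((3 : ℝ)) := by
          rw [Real.norm_eq_abs, abs_pow, show ((3:ℝ)) = ((3:ℕ):ℝ) by norm_num,
            Real.rpow_natCast]
        rw [h1]
        exact Real.rpow_le_rpow_of_exponent_ge (abs_pos.mpr hzne) hz1'.le (by norm_num)
      · have h32 : z ^ ((3:ℝ)/2) = z ^ ((1:ℝ)/2) * z := by
          rw [show (3:ℝ)/2 = 1/2 + 1 by norm_num, Real.rpow_add hpos, Real.rpow_one]
        have hpz : paperF z = z ^ ((3:ℝ)/2) := by simp [paperF, not_le.mpr hpos]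
        have : paperF z / z = z ^ ((1:ℝ)/2) := by
          rw [hpz, h32, mul_div_assoc, div_self hzne, mul_one]
        rw [this]
        rw [Real.norm_eq_abs, abs_of_nonneg (Real.rpow_nonneg hpos.le _), abs_of_pos hpos]
    · have hc : ContinuousAt (fun z : ℝ => |z| ^ ((1:ℝ)/2)) 0 := by
        apply ContinuousAt.comp (g := fun y : ℝ => y ^ ((1:ℝ)/2))
        · simpa using Real.continuousAt_rpow_const 0 (1/2) (Or.inr (by norm_num))
        · exact continuous_abs.continuousAt
      have := hc.tendsto
      simp only [abs_zero, Real.zero_rpow (by norm_num : (1:ℝ)/2 ≠ 0)] at this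
      exact this.mono_left nhdsWithin_le_nhds
  · have hEq : paperF =ᶠ[𝓝 x] fun y => y ^ ((3:ℝ)/2) := by
      filter_upwards [Ioi_mem_nhds hx] with y (hy : 0 < y)
      simp [paperF, not_le.mpr hy]
    have : HasDerivAt (fun y : ℝ => y ^ ((3:ℝ)/2)) ((3:ℝ)/2 * x ^ ((3:ℝ)/2 - 1)) x :=
      Real.hasDerivAt_rpow_const (Or.inl hx.ne')
    have h2 : HasDerivAt paperF ((3:ℝ)/2 * x ^ ((3:ℝ)/2 - 1)) x :=
      this.congr_of_eventuallyEq hEq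
    have h3 : (3:ℝ)/2 - 1 = 1/2 := by norm_num
    rw [h3] at h2
    simpa [paperF', not_le.mpr hx] using h2

lemma paperF'_monotone : Monotone paperF' := by
  intro a b hab
  unfold paperF'
  split_ifs with ha hb hb
  · nlinarith [sq_nonneg (a + b), sq_nonneg a, sq_nonneg b, sq_nonneg (a - b)]
  · push_neg at hb
    have h1 : 4 * a ^ 3 ≤ 0 := by nlinarith [mul_nonneg (sq_nonneg a) (neg_nonneg.2 ha)]
    have h2 : (0:ℝ) ≤ (3/2 : ℝ) * b ^ ((1:ℝ)/2) := by positivity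
    linarith
  · exact absurd (hab.trans hb) ha
  · push_neg at ha hb
    exact mul_le_mul_of_nonneg_left
      (Real.rpow_le_rpow ha.le hab (by norm_num)) (by norm_num)

theorem paperF_convexOn : ConvexOn ℝ (Set.Icc (-1 : ℝ) 1) paperF := by
  have hderiv : deriv paperF = paperF' := funext fun x => (paperF_hasDerivAt x).deriv
  apply MonotoneOn.convexOn_of_deriv (convex_Icc _ _)
  · exact fun x _ => ((paperF_hasDerivAt x).continuousAt).continuousWithinAt
  · exact fun x _ => (paperF_hasDerivAt x).differentiableAt.differentiableWithinAt
  · rw [hderiv]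
    exact paperF'_monotone.monotoneOn _

/-- `f` is convex on `[-1,1]`, the boundary of its epigraph has infinite
upper curvature at the origin (`limsup_{x→0,x≠0} f(x)/x² = ∞`) but lower curvature `0`
(`liminf_{x→0,x≠0} f(x)/x² = 0`). -/
theorem paperF_convex_upper_curvature_top_lower_curvature_zero :
    ConvexOn ℝ (Set.Icc (-1 : ℝ) 1) paperF ∧
    Filter.limsup (fun x : ℝ => ((paperF x / x ^ 2 : ℝ) : EReal))
        (𝓝[{x : ℝ | x ∈ Set.Icc (-1 : ℝ) 1 ∧ x ≠ 0}] 0) = ⊤ ∧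
    Filter.liminf (fun x : ℝ => ((paperF x / x ^ 2 : ℝ) : EReal))
        (𝓝[{x : ℝ | x ∈ Set.Icc (-1 : ℝ) 1 ∧ x ≠ 0}] 0) = 0 := by
  set S : Set ℝ := {x : ℝ | x ∈ Set.Icc (-1 : ℝ) 1 ∧ x ≠ 0} with hS
  set u : ℝ → EReal := fun x : ℝ => ((paperF x / x ^ 2 : ℝ) : EReal) with hu
  refine ⟨paperF_convexOn, ?_, ?_⟩
  · -- limsup = ⊤
    have hsub : Set.Ioo (0:ℝ) 1 ⊆ S := by
      intro x hx
      exact ⟨⟨by linarith [hx.1], hx.2.le⟩, hx.1.ne'⟩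
    have hle : 𝓝[Set.Ioo (0:ℝ) 1] 0 ≤ 𝓝[S] 0 := nhdsWithin_mono _ hsub
    have hne : (𝓝[Set.Ioo (0:ℝ) 1] (0:ℝ)).NeBot := by
      rw [← mem_closure_iff_nhdsWithin_neBot, closure_Ioo (by norm_num : (0:ℝ) ≠ 1)]
      exact ⟨le_refl 0, by norm_num⟩
    have htt : Tendsto u (𝓝[Set.Ioo (0:ℝ) 1] 0) (𝓝 ⊤) := by
      have hreal : Tendsto (fun x : ℝ => paperF x / x ^ 2) (𝓝[Set.Ioo (0:ℝ) 1] 0) atTop := by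
        have hEq : ∀ x ∈ Set.Ioo (0:ℝ) 1, paperF x / x ^ 2 = (x ^ ((1:ℝ)/2))⁻¹ := by
          intro x hx
          have hx0 : 0 < x := hx.1
          have : paperF x = x ^ ((3:ℝ)/2) := by simp [paperF, not_le.mpr hx0]
          rw [this, show (x:ℝ) ^ 2 = x ^ ((2:ℝ)) by rw [← Real.rpow_natCast x 2]; norm_num,
            ← Real.rpow_sub hx0, show (3:ℝ)/2 - 2 = -(1/2) by norm_num,
            Real.rpow_neg hx0.le]
        have hhalf : Tendsto (fun x : ℝ => x ^ ((1:ℝ)/2)) (𝓝[Set.Ioo (0:ℝ) 1] 0) (𝓝[>] 0) := by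
          apply tendsto_nhdsWithin_of_tendsto_nhds_of_eventually_within
          · have hc : ContinuousAt (fun x : ℝ => x ^ ((1:ℝ)/2)) 0 :=
              Real.continuousAt_rpow_const 0 (1/2) (Or.inr (by norm_num))
            have := hc.tendsto
            rw [Real.zero_rpow (by norm_num : (1:ℝ)/2 ≠ 0)] at this
            exact this.mono_left nhdsWithin_le_nhds
          · filter_upwards [self_mem_nhdsWithin] with x hx
            exact Real.rpow_pos_of_pos hx.1 _
        have := tendsto_inv_nhdsGT_zero.comp hhalf
        refine this.congr' ?_
        filter_upwards [self_mem_nhdsWithin] with x hx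
        exact (hEq x hx).symm
      rw [EReal.tendsto_nhds_top_iff_real]
      intro c
      filter_upwards [hreal.eventually_gt_atTop c] with x hx
      simp only [hu]
      exact_mod_cast hx
    have h1 : Filter.limsup u (𝓝[Set.Ioo (0:ℝ) 1] 0) = ⊤ := htt.limsup_eq
    have h2 := limsup_le_limsup_of_le (u := u) hle
    rw [h1] at h2
    exact top_le_iff.mp h2
  · -- liminf = 0
    have hsub : Set.Ioo (-1:ℝ) 0 ⊆ S := by
      intro x hx
      exact ⟨⟨hx.1.le, by linarith [hx.2]⟩, hx.2.ne⟩
    have hle : 𝓝[Set.Ioo (-1:ℝ) 0] 0 ≤ 𝓝[S] 0 := nhdsWithin_mono _ hsub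
    have hne : (𝓝[Set.Ioo (-1:ℝ) 0] (0:ℝ)).NeBot := by
      rw [← mem_closure_iff_nhdsWithin_neBot, closure_Ioo (by norm_num : (-1:ℝ) ≠ 0)]
      exact ⟨by norm_num, le_refl 0⟩
    have htt : Tendsto u (𝓝[Set.Ioo (-1:ℝ) 0] 0) (𝓝 (0 : EReal)) := by
      have hreal : Tendsto (fun x : ℝ => paperF x / x ^ 2) (𝓝[Set.Ioo (-1:ℝ) 0] 0) (𝓝 0) := by
        have hEq : ∀ᶠ x in 𝓝[Set.Ioo (-1:ℝ) 0] (0:ℝ), x ^ 2 = paperF x / x ^ 2 := by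
          filter_upwards [self_mem_nhdsWithin] with x hx
          have hx0 : x < 0 := hx.2
          have : paperF x = x ^ 4 := by simp [paperF, hx0.le]
          rw [this, eq_div_iff (pow_ne_zero 2 hx0.ne)]
          ring
        have hsq : Tendsto (fun x : ℝ => x ^ 2) (𝓝[Set.Ioo (-1:ℝ) 0] (0:ℝ)) (𝓝 0) := by
          have : Tendsto (fun x : ℝ => x ^ 2) (𝓝 (0:ℝ)) (𝓝 ((0:ℝ) ^ 2)) :=
            (continuous_pow 2).continuousAt
          simpa using this.mono_left nhdsWithin_le_nhds
        exact hsq.congr' hEq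
      have : Tendsto (fun y : ℝ => (y : EReal)) (𝓝 (0:ℝ)) (𝓝 ((0:ℝ) : EReal)) :=
        continuous_coe_real_ereal.continuousAt
      have h := this.comp hreal
      simp only [Function.comp_def, EReal.coe_zero] at h
      exact h
    have h1 : Filter.liminf u (𝓝[Set.Ioo (-1:ℝ) 0] 0) = 0 := htt.liminf_eq
    have h2 := liminf_le_liminf_of_le (u := u) hle
    rw [h1] at h2
    have h3 : (0 : EReal) ≤ Filter.liminf u (𝓝[S] 0) := by
      apply le_liminf_of_le
      · isBoundedDefault
      · filter_upwards with x
        have : (0:ℝ) ≤ paperF x / x ^ 2 := by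
          apply div_nonneg (paperF_nonneg x) (sq_nonneg x)
        simp only [hu]
        exact_mod_cast this
    exact le_antisymm h2 h3
end

section
/- (Berberian) For the Berberian extension A_0 of a bounded operator A, the point spectrum of A_0 equals the approximate point spectrum of A: σ_p(A_0) = σ_ap(A). -/
open Filter Topology
open scoped ComplexInnerProductSpace BoundedContinuousFunction

/-- A Banach limit on `ℓ^∞(ℕ)` (properties assumed on bounded sequences). -/
def IsBanachLimit (LIM : (ℕ → ℂ) → ℂ) : Prop :=
  (∀ x y : ℕ → ℂ, Bornology.IsBounded (Set.range x) → Bornology.IsBounded (Set.range y) →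
      LIM (x + y) = LIM x + LIM y) ∧
  (∀ (c : ℂ) (x : ℕ → ℂ), Bornology.IsBounded (Set.range x) → LIM (c • x) = c * LIM x) ∧
  (∀ x : ℕ → ℂ, Bornology.IsBounded (Set.range x) → (∀ n, 0 ≤ (x n).re ∧ (x n).im = 0) →
      0 ≤ (LIM x).re ∧ (LIM x).im = 0) ∧
  (∀ x : ℕ → ℂ, Bornology.IsBounded (Set.range x) → LIM (fun n => x (n + 1)) = LIM x) ∧
  (∀ (x : ℕ → ℂ) (z : ℂ), Tendsto x atTop (𝓝 z) → LIM x = z)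

private lemma bdd_of_bound' {f : ℕ → ℂ} (C : ℝ) (h : ∀ n, ‖f n‖ ≤ C) :
    Bornology.IsBounded (Set.range f) :=
  isBounded_iff_forall_norm_le.mpr ⟨C, by rintro x ⟨n, rfl⟩; exact h n⟩

private lemma inner_self_c {H : Type*} [NormedAddCommGroup H] [InnerProductSpace ℂ H]
    (x : H) : (⟪x, x⟫ : ℂ) = ((‖x‖ : ℂ)) ^ 2 := by
  exact_mod_cast inner_self_eq_norm_sq_to_K x

private lemma bdd_inner_self {H : Type*} [NormedAddCommGroup H] [InnerProductSpace ℂ H]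
    (z : ℕ →ᵇ H) : Bornology.IsBounded (Set.range fun n => (⟪z n, z n⟫ : ℂ)) := by
  apply bdd_of_bound' (‖z‖ * ‖z‖)
  intro n
  calc ‖(⟪z n, z n⟫ : ℂ)‖ ≤ ‖z n‖ * ‖z n‖ := norm_inner_le_norm _ _
    _ ≤ ‖z‖ * ‖z‖ :=
      mul_le_mul (z.norm_coe_le_norm n) (z.norm_coe_le_norm n) (norm_nonneg _) (norm_nonneg _)

/-- Berberian: the Berberian extension `A₀` of `A` (acting on the
Hilbert space `H₀` obtained by completing the bounded sequences `X = ℓ^∞(ℕ, H)`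
modulo the null space of the Banach-limit semi-inner product, via the canonical
map `e : X → H₀` with dense range) satisfies `σ_p(A₀) = σ_ap(A)`. -/
theorem berberian_point_spectrum_eq_approxPointSpectrum {H : Type*}
    [NormedAddCommGroup H] [InnerProductSpace ℂ H] [CompleteSpace H]
    (LIM : (ℕ → ℂ) → ℂ) (hLIM : IsBanachLimit LIM)
    (H₀ : Type*) [NormedAddCommGroup H₀] [InnerProductSpace ℂ H₀] [CompleteSpace H₀]
    (e : (ℕ →ᵇ H) →ₗ[ℂ] H₀) (hdense : DenseRange e)
    (hinner : ∀ x y : ℕ →ᵇ H, ⟪e x, e y⟫ = LIM fun n => ⟪x n, y n⟫)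
    (A : H →L[ℂ] H) (A₀ : H₀ →L[ℂ] H₀)
    (hA₀ : ∀ x y : ℕ →ᵇ H, (∀ n, y n = A (x n)) → A₀ (e x) = e y) :
    {lam : ℂ | ∃ v : H₀, v ≠ 0 ∧ A₀ v = lam • v} = approxPointSpectrum A := by
  obtain ⟨hadd, hsmul, hpos, -, hconv⟩ := hLIM
  ext lam
  simp only [Set.mem_setOf_eq]
  constructor
  · rintro ⟨v, hv0, hv⟩
    by_contra hnot
    -- Since `lam ∉ σ_ap(A)`, `A - lam` is bounded below on `H`.
    have hc : ∃ c : ℝ, 0 < c ∧ ∀ h : H, c * ‖h‖ ≤ ‖A h - lam • h‖ := by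
      by_contra hcn
      push_neg at hcn
      apply hnot
      have hex : ∀ n : ℕ, ∃ h : H, ‖A h - lam • h‖ < (1 / (n + 1 : ℝ)) * ‖h‖ := fun n =>
        hcn (1 / (n + 1 : ℝ)) (by positivity)
      choose g hg using hex
      have hgnorm : ∀ n, (0 : ℝ) < ‖g n‖ := by
        intro n
        rcases eq_or_ne (g n) 0 with h0 | h0
        · have := hg n; rw [h0] at this; simp at this
        · exact norm_pos_iff.mpr h0
      refine ⟨fun n => ((‖g n‖ : ℂ))⁻¹ • g n, fun n => ?_, ?_⟩
      · rw [norm_smul, norm_inv, Complex.norm_real, norm_norm,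
          inv_mul_cancel₀ (hgnorm n).ne']
      · apply squeeze_zero (fun n => norm_nonneg _) (fun n => ?_)
          tendsto_one_div_add_atTop_nhds_zero_nat
        have heq : A (((‖g n‖ : ℂ))⁻¹ • g n) - lam • (((‖g n‖ : ℂ))⁻¹ • g n)
            = ((‖g n‖ : ℂ))⁻¹ • (A (g n) - lam • g n) := by
          rw [map_smul, smul_comm lam, ← smul_sub]
        rw [heq, norm_smul, norm_inv, Complex.norm_real, norm_norm]
        have h1 : ‖g n‖⁻¹ * ‖A (g n) - lam • g n‖
            ≤ ‖g n‖⁻¹ * ((1 / (n + 1 : ℝ)) * ‖g n‖) :=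
          mul_le_mul_of_nonneg_left (hg n).le (by positivity)
        calc ‖g n‖⁻¹ * ‖A (g n) - lam • g n‖
            ≤ ‖g n‖⁻¹ * ((1 / (n + 1 : ℝ)) * ‖g n‖) := h1
          _ = 1 / (n + 1 : ℝ) := by
              rw [mul_comm (1 / (n + 1 : ℝ))]
              rw [← mul_assoc, inv_mul_cancel₀ (hgnorm n).ne', one_mul]
    obtain ⟨c, hc0, hc⟩ := hc
    -- bounded below on the range of `e`
    have hrange : ∀ x : ℕ →ᵇ H, c * ‖e x‖ ≤ ‖A₀ (e x) - lam • e x‖ := by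
      intro x
      set y : ℕ →ᵇ H := BoundedContinuousFunction.comp (⇑A) A.lipschitz x with hy
      set w : ℕ →ᵇ H := y - lam • x with hw
      have hwn : ∀ n, w n = A (x n) - lam • x n := fun n => rfl
      have hAe : A₀ (e x) - lam • e x = e w := by
        rw [hA₀ x y (fun n => rfl), hw, map_sub, map_smul]
      set F : ℕ → ℂ := fun n => ⟪w n, w n⟫ with hF
      set G : ℕ → ℂ := fun n => ((c : ℂ)) ^ 2 * ⟪x n, x n⟫ with hG
      have hFb : Bornology.IsBounded (Set.range F) := bdd_inner_self w
      have hGb : Bornology.IsBounded (Set.range G) := by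
        obtain ⟨C, hC⟩ := isBounded_iff_forall_norm_le.mp (bdd_inner_self x)
        apply bdd_of_bound' (‖(c : ℂ) ^ 2‖ * C)
        intro n
        rw [hG, norm_mul]
        exact mul_le_mul_of_nonneg_left (hC _ ⟨n, rfl⟩) (norm_nonneg _)
      have hFGb : Bornology.IsBounded (Set.range (F - G)) := by
        obtain ⟨C, hC⟩ := isBounded_iff_forall_norm_le.mp hFb
        obtain ⟨D, hD⟩ := isBounded_iff_forall_norm_le.mp hGb
        apply bdd_of_bound' (C + D)
        intro n
        calc ‖(F - G) n‖ = ‖F n - G n‖ := rfl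
          _ ≤ ‖F n‖ + ‖G n‖ := norm_sub_le _ _
          _ ≤ C + D := add_le_add (hC _ ⟨n, rfl⟩) (hD _ ⟨n, rfl⟩)
      have hFGpos : ∀ n, 0 ≤ ((F - G) n).re ∧ ((F - G) n).im = 0 := by
        intro n
        have h1 : F n = ((‖w n‖ ^ 2 : ℝ) : ℂ) := by
          show (⟪w n, w n⟫ : ℂ) = _
          rw [inner_self_c]; push_cast; ring
        have h2 : G n = ((c ^ 2 * ‖x n‖ ^ 2 : ℝ) : ℂ) := by
          show ((c : ℂ)) ^ 2 * (⟪x n, x n⟫ : ℂ) = _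
          rw [inner_self_c]; push_cast; ring
        have h3 : c ^ 2 * ‖x n‖ ^ 2 ≤ ‖w n‖ ^ 2 := by
          have := hc (x n)
          rw [← hwn n] at this
          calc c ^ 2 * ‖x n‖ ^ 2 = (c * ‖x n‖) ^ 2 := by ring
            _ ≤ ‖w n‖ ^ 2 := by
              apply pow_le_pow_left₀ (by positivity) this
        simp only [Pi.sub_apply, h1, h2, Complex.sub_re, Complex.sub_im,
          Complex.ofReal_re, Complex.ofReal_im, sub_zero, sub_nonneg]
        exact ⟨h3, trivial⟩
      have hsplit : LIM F = LIM G + LIM (F - G) := by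
        have h := hadd G (F - G) hGb hFGb
        rw [show G + (F - G) = F from by funext n; simp] at h
        exact h
      have hLF : ((‖e w‖ : ℂ)) ^ 2 = LIM F := by
        rw [← inner_self_c, hinner]
      have hLG : LIM G = ((c : ℂ)) ^ 2 * ((‖e x‖ : ℂ)) ^ 2 := by
        have hGeq : G = ((c : ℂ) ^ 2) • fun n => (⟪x n, x n⟫ : ℂ) := by
          funext n; simp [hG, Pi.smul_apply, smul_eq_mul]
        rw [hGeq, hsmul _ _ (bdd_inner_self x), ← hinner, inner_self_c]
      have hDre := hpos (F - G) hFGb hFGpos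
      -- take real parts
      have hre : ‖e w‖ ^ 2 = c ^ 2 * ‖e x‖ ^ 2 + (LIM (F - G)).re := by
        have := congrArg Complex.re (hLF.trans (hsplit.trans (by rw [hLG])))
        simpa [Complex.add_re, Complex.mul_re, ← Complex.ofReal_pow,
          Complex.ofReal_re, Complex.ofReal_im] using this
      have hsq : (c * ‖e x‖) ^ 2 ≤ ‖e w‖ ^ 2 := by
        rw [hre, mul_pow]; linarith [hDre.1]
      have : c * ‖e x‖ ≤ ‖e w‖ := by
        have h := Real.sqrt_le_sqrt hsq
        rwa [Real.sqrt_sq (by positivity), Real.sqrt_sq (norm_nonneg _)] at h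
      rwa [hAe]
    -- extend to all of `H₀` by density
    have hall : ∀ z : H₀, c * ‖z‖ ≤ ‖A₀ z - lam • z‖ := by
      have hclosed : IsClosed {z : H₀ | c * ‖z‖ ≤ ‖A₀ z - lam • z‖} := by
        apply isClosed_le
        · exact (continuous_const.mul continuous_norm)
        · exact ((A₀.continuous.sub (continuous_const_smul lam)).norm)
      intro z
      have hsub : Set.range e ⊆ {z : H₀ | c * ‖z‖ ≤ ‖A₀ z - lam • z‖} := by
        rintro _ ⟨x, rfl⟩; exact hrange x
      have := closure_minimal hsub hclosed
      have hz : z ∈ closure (Set.range ⇑e) := hdense z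
      exact this hz
    have := hall v
    rw [hv, sub_self, norm_zero] at this
    have : ‖v‖ ≤ 0 := nonpos_of_mul_nonpos_right (by linarith) hc0
    exact hv0 (norm_le_zero_iff.mp this)
  · rintro ⟨u, hu1, hu2⟩
    set x : ℕ →ᵇ H :=
      BoundedContinuousFunction.ofNormedAddCommGroup u (by continuity) 1 (fun n => (hu1 n).le)
      with hx
    have hxn : ∀ n, x n = u n := fun n => rfl
    set y : ℕ →ᵇ H := BoundedContinuousFunction.comp (⇑A) A.lipschitz x with hy
    set w : ℕ →ᵇ H := y - lam • x with hw
    have hwn : ∀ n, w n = A (u n) - lam • u n := fun n => rfl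
    refine ⟨e x, ?_, ?_⟩
    · intro h0
      have h1 : (⟪e x, e x⟫ : ℂ) = 1 := by
        rw [hinner]
        apply hconv _ 1
        have : (fun n => (⟪x n, x n⟫ : ℂ)) = fun _ => (1 : ℂ) := by
          funext n
          rw [inner_self_c, hxn n, hu1 n]
          norm_num
        rw [this]
        exact tendsto_const_nhds
      rw [h0] at h1
      simp at h1
    · have hew : e w = 0 := by
        rw [← inner_self_eq_zero (𝕜 := ℂ), hinner]
        apply hconv _ 0
        have heq : (fun n => (⟪w n, w n⟫ : ℂ)) = fun n => ((‖A (u n) - lam • u n‖ : ℂ)) ^ 2 := by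
          funext n; rw [inner_self_c, hwn n]
        rw [heq]
        have := ((Complex.continuous_ofReal.tendsto 0).comp hu2).pow 2
        simpa using this
      have hAe : A₀ (e x) = e y := hA₀ x y (fun n => rfl)
      have : e w = e y - lam • e x := by rw [hw, map_sub, map_smul]
      rw [hew] at this
      rw [hAe]
      exact sub_eq_zero.mp this.symm
end
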